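/- (Exact order of approximation) Under the hypotheses of the upper and lower estimates, if f analytic in D_R (R > q > p > 1) is not a polynomial of degree ≤ 1, then ‖L_{n,p,q}(f) - f‖_r ~ p^n/[n]_{p,q}, i.e., there exist constants 0 < c ≤ C (depending on f, r, r_1, p, q but not on n) with c·p^n/[n]_{p,q} ≤ ‖L_{n,p,q}(f) - f‖_r ≤ C·p^n/[n]_{p,q} for all n ∈ ℕ. -/

import Mathlib

/-- The `(p,q)`-integer `[n]_{p,q} = (q^n - p^n)/(q - p)`. -/
noncomputable def pqInt (p q : ℝ) (n : ℕ) : ℝ := (q ^ n - p ^ n) / (q - p)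

/-- The `(p,q)`-factorial `[n]_{p,q}! = [1]_{p,q}·[2]_{p,q}···[n]_{p,q}`. -/
noncomputable def pqFact (p q : ℝ) : ℕ → ℝ
  | 0 => 1
  | n + 1 => pqFact p q n * pqInt p q (n + 1)

/-- The `(p,q)`-binomial coefficient. -/
noncomputable def pqBinom (p q : ℝ) (n k : ℕ) : ℝ :=
  pqFact p q n / (pqFact p q k * pqFact p q (n - k))

/-- The `(p,q)`-derivative, with `D_{p,q}f(0) = f'(0)`. -/
noncomputable def pqDeriv (p q : ℝ) (f : ℂ → ℂ) (x : ℂ) : ℂ :=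
  if x = 0 then deriv f 0 else (f ((p : ℂ) * x) - f ((q : ℂ) * x)) / (((p : ℂ) - q) * x)

/-- Iterated `(p,q)`-derivative `D_{p,q}^{(k)}`. -/
noncomputable def pqDerivIter (p q : ℝ) : ℕ → (ℂ → ℂ) → (ℂ → ℂ)
  | 0, f => f
  | k + 1, f => pqDeriv p q (pqDerivIter p q k f)

/-- The complex `(p,q)`-Lorentz polynomial
`L_{n,p,q}(f)(z) = Σ_{k=0}^{n} q^{k(k-1)/2} binom(n,k)_{p,q} (z/[n]_{p,q})^k D_{p,q}^{(k)}f(0)`. -/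
noncomputable def lorentz (p q : ℝ) (n : ℕ) (f : ℂ → ℂ) (z : ℂ) : ℂ :=
  ∑ k ∈ Finset.range (n + 1),
    (q : ℂ) ^ (k * (k - 1) / 2) * (pqBinom p q n k : ℂ) *
      (z / (pqInt p q n : ℂ)) ^ k * pqDerivIter p q k f 0

/-- `‖g‖_r = max_{|z| ≤ r} |g(z)|`. -/
noncomputable def supNorm (r : ℝ) (g : ℂ → ℂ) : ℝ :=
  sSup ((fun z => ‖g z‖) '' Metric.closedBall (0 : ℂ) r)

/-!
`L_{n,p,q}` is diagonal on monomials: `L_{n,p,q}(z^k) = λ_{n,k} z^k` with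
`λ_{n,k} = ∏_{j<k} q^j [n-j]_{p,q} / [n]_{p,q}`, so `L_{n,p,q}(f) - f = -∑ (1 - λ_{n,k}) c_k z^k`.
Each factor lies in `[0, 1]` and misses `1` by at most `(q/p)^j p^n / (q^n - p^n)`; summing this
geometric bound gives `1 - λ_{n,k} ≤ p/(q-p)^2 · (q/p)^k · p^n/[n]_{p,q}`, and the series
`∑ |c_k| (qr/p)^k` converges, which yields the upper estimate. Conversely, for `k ≥ 2` the product
contains the factor `j = 1`, so `1 - λ_{n,k} ≥ 1 - q[n-1]_{p,q}/[n]_{p,q} = p^{n-1}/[n]_{p,q}`,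
and Cauchy's estimate for the coefficient of a nonzero `c_k` with `k ≥ 2` yields the lower one.
-/

open FormalMultilinearSeries Metric Finset
open scoped NNReal ENNReal

section PowerSeries

variable {a : ℕ → ℂ} {g : ℂ → ℂ} {ρ : ℝ}

lemma hasFPowerSeriesOnBall_ofScalars_of_hasSum (hρ : 0 < ρ)
    (h : ∀ z : ℂ, ‖z‖ < ρ → HasSum (fun m => a m * z ^ m) (g z)) :
    HasFPowerSeriesOnBall g (ofScalars ℂ a) 0 (ENNReal.ofReal ρ) where
  r_le := by
    refine ENNReal.le_of_forall_nnreal_lt fun t ht => ?_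
    have htρ : (t : ℝ) < ρ := (ENNReal.lt_ofReal_iff_toReal_lt (by simp)).1 ht
    have hsum := (h t (by simpa using htρ)).summable
    refine (ofScalars ℂ a).le_radius_of_tendsto (l := 0) ?_
    simpa [ofScalars_norm] using hsum.tendsto_atTop_zero.norm
  r_pos := ENNReal.ofReal_pos.2 hρ
  hasSum {y} hy := by
    rw [Metric.eball_ofReal, mem_ball_zero_iff] at hy
    simpa [ofScalars_apply_eq, mul_comm] using h y hy

lemma summable_norm_mul_pow_of_hasSum
    (h : ∀ z : ℂ, ‖z‖ < ρ → HasSum (fun m => a m * z ^ m) (g z)) {s : ℝ} (hs : 0 ≤ s)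
    (hsρ : s < ρ) : Summable fun m => ‖a m‖ * s ^ m := by
  have hball := hasFPowerSeriesOnBall_ofScalars_of_hasSum (hs.trans_lt hsρ) h
  have hrad : ((s.toNNReal : ℝ≥0) : ℝ≥0∞) < (ofScalars ℂ a).radius :=
    lt_of_lt_of_le (by simpa [ENNReal.ofReal] using ⟨hsρ, hs.trans_lt hsρ⟩) hball.r_le
  simpa [ofScalars_norm, Real.coe_toNNReal _ hs] using (ofScalars ℂ a).summable_norm_mul_pow hrad

lemma deriv_zero_eq_of_hasSum (hρ : 0 < ρ)
    (h : ∀ z : ℂ, ‖z‖ < ρ → HasSum (fun m => a m * z ^ m) (g z)) : deriv g 0 = a 1 := by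
  rw [(hasFPowerSeriesOnBall_ofScalars_of_hasSum hρ h).hasFPowerSeriesAt.deriv]
  simp

lemma le_supNorm {r : ℝ} (hg : ContinuousOn g (closedBall 0 r)) {z : ℂ} (hz : ‖z‖ ≤ r) :
    ‖g z‖ ≤ supNorm r g :=
  le_csSup ((isCompact_closedBall 0 r).bddAbove_image hg.norm)
    ⟨z, mem_closedBall_zero_iff.2 hz, rfl⟩

lemma supNorm_le {r C : ℝ} (hC : 0 ≤ C) (h : ∀ z : ℂ, ‖z‖ ≤ r → ‖g z‖ ≤ C) :
    supNorm r g ≤ C :=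
  Real.sSup_le (by rintro _ ⟨z, hz, rfl⟩; exact h z (mem_closedBall_zero_iff.1 hz)) hC

lemma norm_mul_pow_le_supNorm {r : ℝ} (hr : 0 < r) (hrρ : r < ρ)
    (h : ∀ z : ℂ, ‖z‖ < ρ → HasSum (fun m => a m * z ^ m) (g z)) (k : ℕ) :
    ‖a k‖ * r ^ k ≤ supNorm r g := by
  have hball := hasFPowerSeriesOnBall_ofScalars_of_hasSum (hr.trans hrρ) h
  have hdiff : DifferentiableOn ℂ g (ball 0 ρ) := by
    simpa [Metric.eball_ofReal] using hball.differentiableOn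
  have hcl : DiffContOnCl ℂ g (ball 0 r) :=
    hdiff.diffContOnCl_ball (closedBall_subset_ball hrρ)
  have hcoeff : a k = iteratedDeriv k g 0 / k.factorial := by
    have := hball.hasFPowerSeriesAt.eq_formalMultilinearSeries
      (hball.analyticAt.hasFPowerSeriesAt)
    exact congrFun (ofScalars_series_injective ℂ ℂ this) k
  have hcauchy := Complex.norm_iteratedDeriv_le_of_forall_mem_sphere_norm_le k hr hcl
    fun z hz => le_supNorm hcl.continuousOn_ball (by simpa using hz.le)
  rw [hcoeff, norm_div, Complex.norm_natCast, div_mul_eq_mul_div, div_le_iff₀ (by positivity)]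
  rwa [le_div_iff₀ (by positivity), mul_comm (k.factorial : ℝ)] at hcauchy

end PowerSeries

section PQInt

variable {p q : ℝ}

lemma pqInt_nonneg (hp : 0 ≤ p) (hpq : p < q) (n : ℕ) : 0 ≤ pqInt p q n :=
  div_nonneg (sub_nonneg.2 (pow_le_pow_left₀ hp hpq.le n)) (sub_nonneg.2 hpq.le)

lemma pqInt_pos (hp : 0 ≤ p) (hpq : p < q) {n : ℕ} (hn : n ≠ 0) : 0 < pqInt p q n :=
  div_pos (sub_pos.2 (pow_lt_pow_left₀ hpq hp hn)) (sub_pos.2 hpq)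

lemma pqInt_succ (hpq : p ≠ q) (n : ℕ) : pqInt p q (n + 1) = q * pqInt p q n + p ^ n := by
  have : q - p ≠ 0 := sub_ne_zero.2 hpq.symm
  rw [pqInt, pqInt]
  field_simp
  ring

lemma pqFact_eq_prod (n : ℕ) : pqFact p q n = ∏ i ∈ range n, pqInt p q (i + 1) := by
  induction n with
  | zero => rfl
  | succ n ih => rw [pqFact, ih, prod_range_succ]

lemma pqFact_pos (hp : 0 ≤ p) (hpq : p < q) (n : ℕ) : 0 < pqFact p q n := by
  rw [pqFact_eq_prod]
  exact prod_pos fun i _ => pqInt_pos hp hpq i.succ_ne_zero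

lemma pqFact_eq_mul_prod {n k : ℕ} (hk : k ≤ n) :
    pqFact p q n = pqFact p q (n - k) * ∏ j ∈ range k, pqInt p q (n - j) := by
  induction k with
  | zero => simp
  | succ k ih =>
    have hsucc : n - k = n - (k + 1) + 1 := by omega
    rw [ih (by omega), hsucc, pqFact, prod_range_succ, ← hsucc]
    ring

lemma pqBinom_mul_pqFact (hp : 0 ≤ p) (hpq : p < q) {n k : ℕ} (hk : k ≤ n) :
    pqBinom p q n k * pqFact p q k = ∏ j ∈ range k, pqInt p q (n - j) := by
  have := (pqFact_pos hp hpq k).ne'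
  have := (pqFact_pos hp hpq (n - k)).ne'
  rw [pqBinom, pqFact_eq_mul_prod hk]
  field_simp

end PQInt

/-- For `j ≥ n` the truncated `n - j` gives `[0]_{p,q} = 0`, so the factor vanishes. -/
noncomputable def lorentzRatio (p q : ℝ) (n j : ℕ) : ℝ := q ^ j * pqInt p q (n - j) / pqInt p q n

/-- `L_{n,p,q}` maps `z^k` to `lorentzEigenvalue p q n k * z^k`. -/
noncomputable def lorentzEigenvalue (p q : ℝ) (n k : ℕ) : ℝ := ∏ j ∈ range k, lorentzRatio p q n j

lemma one_sub_prod_le_sum_one_sub {ι : Type*} (s : Finset ι) (e : ι → ℝ)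
    (h0 : ∀ j ∈ s, 0 ≤ e j) (h1 : ∀ j ∈ s, e j ≤ 1) : 1 - ∏ j ∈ s, e j ≤ ∑ j ∈ s, (1 - e j) := by
  classical
  induction s using Finset.induction with
  | empty => simp
  | insert a s has ih =>
    rw [prod_insert has, sum_insert has]
    have ha0 := h0 a (mem_insert_self a s)
    have ha1 := h1 a (mem_insert_self a s)
    have hs0 : 0 ≤ ∏ j ∈ s, e j := prod_nonneg fun j hj => h0 j (mem_insert_of_mem hj)
    have hs1 : ∏ j ∈ s, e j ≤ 1 :=
      prod_le_one (fun j hj => h0 j (mem_insert_of_mem hj)) fun j hj => h1 j (mem_insert_of_mem hj)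
    have ih' := ih (fun j hj => h0 j (mem_insert_of_mem hj)) fun j hj => h1 j (mem_insert_of_mem hj)
    nlinarith

lemma geom_sum_le_pow_div_sub_one {x : ℝ} (hx : 1 < x) (k : ℕ) :
    ∑ j ∈ range k, x ^ j ≤ x ^ k / (x - 1) := by
  rw [le_div_iff₀ (sub_pos.2 hx), geom_sum_mul]
  linarith

section LorentzEigenvalue

variable {p q : ℝ} {n : ℕ}

lemma lorentzRatio_of_le {j : ℕ} (hj : n ≤ j) : lorentzRatio p q n j = 0 := by
  simp [lorentzRatio, pqInt, Nat.sub_eq_zero_of_le hj]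

lemma one_sub_lorentzRatio_of_le (hp : 0 ≤ p) (hpq : p < q) (hn : n ≠ 0) {j : ℕ} (hj : j ≤ n) :
    1 - lorentzRatio p q n j = (q ^ j * p ^ (n - j) - p ^ n) / (q ^ n - p ^ n) := by
  have hqp : q - p ≠ 0 := sub_ne_zero.2 hpq.ne'
  have hD : q ^ n - p ^ n ≠ 0 := (sub_pos.2 (pow_lt_pow_left₀ hpq hp hn)).ne'
  obtain ⟨m, rfl⟩ := Nat.exists_eq_add_of_le hj
  rw [lorentzRatio, pqInt, pqInt, Nat.add_sub_cancel_left]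
  field_simp
  ring

lemma one_sub_lorentzRatio_one (hp : 0 ≤ p) (hpq : p < q) (hn : n ≠ 0) :
    1 - lorentzRatio p q n 1 = p ^ (n - 1) / pqInt p q n := by
  obtain ⟨m, rfl⟩ : ∃ m, n = m + 1 := ⟨n - 1, by omega⟩
  have hI := (pqInt_pos hp hpq hn).ne'
  rw [pqInt_succ hpq.ne] at hI
  rw [lorentzRatio, Nat.add_sub_cancel, pqInt_succ hpq.ne]
  field_simp
  ring

lemma lorentzRatio_nonneg (hp : 0 ≤ p) (hpq : p < q) (j : ℕ) : 0 ≤ lorentzRatio p q n j :=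
  div_nonneg (mul_nonneg (pow_nonneg (hp.trans hpq.le) j) (pqInt_nonneg hp hpq _))
    (pqInt_nonneg hp hpq n)

lemma lorentzRatio_le_one (hp : 0 ≤ p) (hpq : p < q) (hn : n ≠ 0) (j : ℕ) :
    lorentzRatio p q n j ≤ 1 := by
  rcases le_or_gt j n with hj | hj
  · have hD : 0 < q ^ n - p ^ n := sub_pos.2 (pow_lt_pow_left₀ hpq hp hn)
    have hpow : p ^ n ≤ q ^ j * p ^ (n - j) := by
      rw [← Nat.add_sub_cancel' hj, pow_add, Nat.add_sub_cancel_left]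
      exact mul_le_mul_of_nonneg_right (pow_le_pow_left₀ hp hpq.le j) (pow_nonneg hp _)
    have hgap : 0 ≤ 1 - lorentzRatio p q n j := by
      rw [one_sub_lorentzRatio_of_le hp hpq hn hj]
      exact div_nonneg (sub_nonneg.2 hpow) hD.le
    linarith
  · rw [lorentzRatio_of_le hj.le]
    exact zero_le_one

lemma one_sub_lorentzRatio_le (hp : 0 < p) (hpq : p < q) (hn : n ≠ 0) (j : ℕ) :
    1 - lorentzRatio p q n j ≤ (q / p) ^ j * (p ^ n / (q ^ n - p ^ n)) := by
  have hD : 0 < q ^ n - p ^ n := sub_pos.2 (pow_lt_pow_left₀ hpq hp.le hn)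
  rcases le_or_gt j n with hj | hj
  · rw [one_sub_lorentzRatio_of_le hp.le hpq hn hj, ← mul_div_assoc]
    refine div_le_div_of_nonneg_right ?_ hD.le
    have hpow : (q / p) ^ j * p ^ n = q ^ j * p ^ (n - j) := by
      rw [div_pow, ← Nat.add_sub_cancel' hj, pow_add, Nat.add_sub_cancel_left]
      field_simp
    linarith [pow_pos hp n]
  · rw [lorentzRatio_of_le hj.le, sub_zero, ← mul_div_assoc, le_div_iff₀ hD, one_mul]
    have hpow : q ^ n ≤ (q / p) ^ j * p ^ n := by
      calc q ^ n = (q / p) ^ n * p ^ n := by rw [div_pow]; field_simp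
        _ ≤ (q / p) ^ j * p ^ n := by
          gcongr
          exact (one_le_div hp).2 hpq.le
    linarith [pow_pos hp n]

lemma lorentzEigenvalue_le_one (hp : 0 ≤ p) (hpq : p < q) (hn : n ≠ 0) (k : ℕ) :
    lorentzEigenvalue p q n k ≤ 1 :=
  prod_le_one (fun j _ => lorentzRatio_nonneg hp hpq j) fun j _ => lorentzRatio_le_one hp hpq hn j

lemma one_sub_lorentzEigenvalue_le (hp : 0 < p) (hpq : p < q) (hn : n ≠ 0) (k : ℕ) :
    1 - lorentzEigenvalue p q n k ≤ p / (q - p) ^ 2 * (q / p) ^ k * (p ^ n / pqInt p q n) := by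
  have hqp : 0 < q - p := sub_pos.2 hpq
  have hD : 0 < q ^ n - p ^ n := sub_pos.2 (pow_lt_pow_left₀ hpq hp.le hn)
  have hgeom := geom_sum_le_pow_div_sub_one ((one_lt_div hp).2 hpq) k
  calc 1 - lorentzEigenvalue p q n k
      ≤ ∑ j ∈ range k, (1 - lorentzRatio p q n j) :=
        one_sub_prod_le_sum_one_sub _ _ (fun j _ => lorentzRatio_nonneg hp.le hpq j)
          fun j _ => lorentzRatio_le_one hp.le hpq hn j
    _ ≤ ∑ j ∈ range k, (q / p) ^ j * (p ^ n / (q ^ n - p ^ n)) :=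
        sum_le_sum fun j _ => one_sub_lorentzRatio_le hp hpq hn j
    _ = (∑ j ∈ range k, (q / p) ^ j) * (p ^ n / (q ^ n - p ^ n)) := (sum_mul ..).symm
    _ ≤ (q / p) ^ k / (q / p - 1) * (p ^ n / (q ^ n - p ^ n)) := by gcongr
    _ = p / (q - p) ^ 2 * (q / p) ^ k * (p ^ n / pqInt p q n) := by
        rw [pqInt]
        field_simp

lemma pow_pred_div_pqInt_le_one_sub_lorentzEigenvalue (hp : 0 ≤ p) (hpq : p < q) (hn : n ≠ 0)
    {k : ℕ} (hk : 2 ≤ k) : p ^ (n - 1) / pqInt p q n ≤ 1 - lorentzEigenvalue p q n k := by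
  have h1 : 1 ∈ range k := mem_range.2 (by omega)
  have hrest : ∏ j ∈ (range k).erase 1, lorentzRatio p q n j ≤ 1 :=
    prod_le_one (fun j _ => lorentzRatio_nonneg hp hpq j) fun j _ => lorentzRatio_le_one hp hpq hn j
  have hle : lorentzEigenvalue p q n k ≤ lorentzRatio p q n 1 := by
    rw [lorentzEigenvalue, ← mul_prod_erase _ _ h1]
    exact mul_le_of_le_one_right (lorentzRatio_nonneg hp hpq 1) hrest
  linarith [one_sub_lorentzRatio_one hp hpq hn]

end LorentzEigenvalue

section LorentzOperator

variable {p q ρ : ℝ} {a : ℕ → ℂ} {g : ℂ → ℂ}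

lemma hasSum_pqDeriv (hp : 0 < p) (hpq : p < q)
    (h : ∀ z : ℂ, ‖z‖ < ρ → HasSum (fun m => a m * z ^ m) (g z)) {z : ℂ} (hz : ‖z‖ < ρ / q) :
    HasSum (fun m => (pqInt p q (m + 1) : ℂ) * a (m + 1) * z ^ m) (pqDeriv p q g z) := by
  have hq : 0 < q := hp.trans hpq
  by_cases hz0 : z = 0
  · subst hz0
    have hρ : 0 < ρ := (div_pos_iff_of_pos_right hq).1 ((norm_nonneg _).trans_lt hz)
    rw [pqDeriv, if_pos rfl, deriv_zero_eq_of_hasSum hρ h]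
    convert hasSum_single (f := fun m => (pqInt p q (m + 1) : ℂ) * a (m + 1) * 0 ^ m) 0
      fun m hm => by simp [zero_pow hm] using 1
    simp [pqInt, (sub_pos.2 hpq).ne']
  · have hball : ∀ t : ℝ, 0 < t → t ≤ q → ‖(t : ℂ) * z‖ < ρ := fun t ht htq => by
      rw [norm_mul, Complex.norm_real, Real.norm_of_nonneg ht.le]
      calc t * ‖z‖ ≤ q * ‖z‖ := by gcongr
        _ < ρ := by rwa [lt_div_iff₀' hq] at hz
    have hquot := ((h _ (hball p hp hpq.le)).sub (h _ (hball q hq le_rfl))).div_const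
      (((p : ℂ) - q) * z)
    rw [← hasSum_nat_add_iff' 1] at hquot
    have hpq' : (p : ℂ) - q ≠ 0 := sub_ne_zero.2 (by exact_mod_cast hpq.ne)
    have hqp' : (q : ℂ) - p ≠ 0 := sub_ne_zero.2 (by exact_mod_cast hpq.ne')
    have hterm : ∀ m, (pqInt p q (m + 1) : ℂ) * a (m + 1) * z ^ m =
        (a (m + 1) * (p * z) ^ (m + 1) - a (m + 1) * (q * z) ^ (m + 1)) / ((p - q) * z) := by
      intro m
      rw [pqInt]
      push_cast
      field_simp
      ring
    rw [pqDeriv, if_neg hz0]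
    simp_rw [hterm]
    simpa using hquot

lemma hasSum_pqDerivIter (hp : 0 < p) (hpq : p < q)
    (h : ∀ z : ℂ, ‖z‖ < ρ → HasSum (fun m => a m * z ^ m) (g z)) (k : ℕ) {z : ℂ}
    (hz : ‖z‖ < ρ / q ^ k) :
    HasSum (fun m => ((∏ i ∈ range k, pqInt p q (m + i + 1) : ℝ) : ℂ) * a (m + k) * z ^ m)
      (pqDerivIter p q k g z) := by
  induction k generalizing z with
  | zero => simpa [pqDerivIter] using h z (by simpa using hz)
  | succ k ih =>
    have := hasSum_pqDeriv hp hpq (fun w hw => ih hw) (z := z) (by rwa [pow_succ, ← div_div] at hz)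
    rw [pqDerivIter]
    convert this using 2 with m
    rw [prod_range_succ']
    push_cast
    ring_nf

lemma pqDerivIter_apply_zero (hp : 0 < p) (hpq : p < q) (hρ : 0 < ρ)
    (h : ∀ z : ℂ, ‖z‖ < ρ → HasSum (fun m => a m * z ^ m) (g z)) (k : ℕ) :
    pqDerivIter p q k g 0 = pqFact p q k * a k := by
  have hsum := hasSum_pqDerivIter hp hpq h k (z := 0)
    (by simpa using div_pos hρ (pow_pos (hp.trans hpq) k))
  rw [hsum.unique (hasSum_single 0 fun m hm => by simp [zero_pow hm])]
  simp [pqFact_eq_prod]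

lemma lorentzEigenvalue_eq (hp : 0 ≤ p) (hpq : p < q) {n k : ℕ} (hk : k ≤ n) :
    lorentzEigenvalue p q n k =
      q ^ (k * (k - 1) / 2) * pqBinom p q n k * pqFact p q k / pqInt p q n ^ k := by
  have hpow : q ^ (k * (k - 1) / 2) = ∏ j ∈ range k, q ^ j := by
    rw [prod_pow_eq_pow_sum, sum_range_id]
  rw [mul_assoc, pqBinom_mul_pqFact hp hpq hk, hpow, ← prod_mul_distrib, lorentzEigenvalue]
  simp only [lorentzRatio]
  rw [prod_div_distrib, prod_const, card_range]

lemma lorentzEigenvalue_eq_zero {n k : ℕ} (hk : n < k) : lorentzEigenvalue p q n k = 0 :=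
  prod_eq_zero (mem_range.2 hk) (lorentzRatio_of_le le_rfl)

lemma hasSum_lorentz (hp : 0 < p) (hpq : p < q) (hρ : 0 < ρ)
    (h : ∀ z : ℂ, ‖z‖ < ρ → HasSum (fun m => a m * z ^ m) (g z)) (n : ℕ) (z : ℂ) :
    HasSum (fun k => (lorentzEigenvalue p q n k : ℂ) * a k * z ^ k) (lorentz p q n g z) := by
  have hfin : HasSum _ _ := hasSum_sum_of_ne_finset_zero
    (f := fun k => (lorentzEigenvalue p q n k : ℂ) * a k * z ^ k) (s := range (n + 1))
    fun k hk => by simp [lorentzEigenvalue_eq_zero (by simpa using hk : n < k)]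
  convert hfin using 1
  refine sum_congr rfl fun k hk => ?_
  rw [lorentzEigenvalue_eq hp.le hpq (by simpa [Nat.lt_succ_iff] using hk),
    pqDerivIter_apply_zero hp hpq hρ h]
  push_cast
  ring

lemma hasSum_lorentz_sub (hp : 0 < p) (hpq : p < q)
    (h : ∀ z : ℂ, ‖z‖ < ρ → HasSum (fun m => a m * z ^ m) (g z)) (n : ℕ) {z : ℂ} (hz : ‖z‖ < ρ) :
    HasSum (fun k => ((lorentzEigenvalue p q n k - 1 : ℝ) : ℂ) * a k * z ^ k)
      (lorentz p q n g z - g z) := by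
  simpa only [Complex.ofReal_sub, Complex.ofReal_one, sub_mul, one_mul] using
    (hasSum_lorentz hp hpq ((norm_nonneg z).trans_lt hz) h n z).sub (h z hz)

end LorentzOperator

section Estimates

variable {p q ρ r : ℝ} {a : ℕ → ℂ} {g : ℂ → ℂ} {n : ℕ}

lemma norm_lorentzEigenvalue_sub_one (hp : 0 ≤ p) (hpq : p < q) (hn : n ≠ 0) (k : ℕ) :
    ‖((lorentzEigenvalue p q n k - 1 : ℝ) : ℂ)‖ = 1 - lorentzEigenvalue p q n k := by
  rw [Complex.norm_real, Real.norm_eq_abs, abs_sub_comm,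
    abs_of_nonneg (sub_nonneg.2 (lorentzEigenvalue_le_one hp hpq hn k))]

lemma pow_pred_div_pqInt_mul_le_supNorm_lorentz_sub (hp : 0 < p) (hpq : p < q)
    (h : ∀ z : ℂ, ‖z‖ < ρ → HasSum (fun m => a m * z ^ m) (g z)) (hr : 0 < r) (hrρ : r < ρ)
    (hn : n ≠ 0) {k : ℕ} (hk : 2 ≤ k) :
    p ^ (n - 1) / pqInt p q n * (‖a k‖ * r ^ k) ≤
      supNorm r (fun z => lorentz p q n g z - g z) := by
  have hcauchy := norm_mul_pow_le_supNorm hr hrρ (fun z hz => hasSum_lorentz_sub hp hpq h n hz) k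
  rw [norm_mul, norm_lorentzEigenvalue_sub_one hp.le hpq hn, mul_assoc] at hcauchy
  refine le_trans ?_ hcauchy
  gcongr
  exact pow_pred_div_pqInt_le_one_sub_lorentzEigenvalue hp.le hpq hn hk

lemma supNorm_lorentz_sub_le (hp : 0 < p) (hpq : p < q)
    (h : ∀ z : ℂ, ‖z‖ < ρ → HasSum (fun m => a m * z ^ m) (g z)) (hr : 0 ≤ r)
    (hrρ : q * r / p < ρ) (hn : n ≠ 0) :
    supNorm r (fun z => lorentz p q n g z - g z) ≤
      p / (q - p) ^ 2 * (∑' k, ‖a k‖ * (q * r / p) ^ k) * (p ^ n / pqInt p q n) := by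
  have hq : 0 < q := hp.trans hpq
  have hI := pqInt_pos hp.le hpq hn
  have hrs : r ≤ q * r / p := by
    rw [le_div_iff₀ hp, mul_comm]
    exact mul_le_mul_of_nonneg_right hpq.le hr
  have hsum := summable_norm_mul_pow_of_hasSum h (by positivity) hrρ
  refine supNorm_le (by positivity) fun z hz => ?_
  set M := p / (q - p) ^ 2 * (p ^ n / pqInt p q n)
  have hterm : ∀ k, ‖((lorentzEigenvalue p q n k - 1 : ℝ) : ℂ) * a k * z ^ k‖ ≤
      M * (‖a k‖ * (q * r / p) ^ k) := fun k => by
    rw [norm_mul, norm_mul, norm_pow, norm_lorentzEigenvalue_sub_one hp.le hpq hn]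
    calc (1 - lorentzEigenvalue p q n k) * ‖a k‖ * ‖z‖ ^ k
        ≤ p / (q - p) ^ 2 * (q / p) ^ k * (p ^ n / pqInt p q n) * ‖a k‖ * r ^ k := by
          gcongr
          exact one_sub_lorentzEigenvalue_le hp hpq hn k
      _ = M * (‖a k‖ * (q * r / p) ^ k) := by
          rw [mul_div_right_comm, mul_pow]
          ring
  calc ‖lorentz p q n g z - g z‖ ≤ ∑' k, M * (‖a k‖ * (q * r / p) ^ k) :=
        (hasSum_lorentz_sub hp hpq h n (hz.trans_lt (hrs.trans_lt hrρ))).norm_le_of_bounded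
          (hsum.mul_left M).hasSum hterm
    _ = _ := by
        rw [tsum_mul_left]
        ring

end Estimates

theorem lorentz_exact_order_general (R p q r r₁ : ℝ) (hp : 1 < p) (hpq : p < q)
    (hr : 1 ≤ r) (hrr₁ : q ^ 3 * r < p ^ 3 * r₁) (hr₁R : q ^ 4 * r₁ < p ^ 4 * R)
    (f : ℂ → ℂ) (c : ℕ → ℂ)
    (hf : ∀ z : ℂ, ‖z‖ < R → HasSum (fun k => c k * z ^ k) (f z))
    (hnotlin : ∃ k : ℕ, 2 ≤ k ∧ c k ≠ 0) :
    ∃ c₀ C : ℝ, 0 < c₀ ∧ c₀ ≤ C ∧ ∀ n : ℕ, 1 ≤ n →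
      c₀ * (p ^ n / pqInt p q n) ≤ supNorm r (fun z => lorentz p q n f z - f z) ∧
      supNorm r (fun z => lorentz p q n f z - f z) ≤ C * (p ^ n / pqInt p q n) := by
  obtain ⟨k₀, hk₀, hck₀⟩ := hnotlin
  have hp0 : 0 < p := by linarith
  have hr0 : 0 < r := by linarith
  have hqr : q * r < p * r₁ := by
    have : p ^ 2 * r ≤ q ^ 2 * r := by gcongr
    nlinarith
  have hr₁ : r₁ < R := by
    have : p ^ 4 * r₁ ≤ q ^ 4 * r₁ := by gcongr; nlinarith
    nlinarith [pow_pos hp0 4]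
  have hqrR : q * r / p < R := by
    rw [div_lt_iff₀ hp0]
    nlinarith
  have hrR : r < R := by
    refine lt_of_le_of_lt ?_ hqrR
    rw [le_div_iff₀ hp0]
    nlinarith
  refine ⟨‖c k₀‖ * r ^ k₀ / p, max (‖c k₀‖ * r ^ k₀ / p) (p / (q - p) ^ 2 *
    ∑' k, ‖c k‖ * (q * r / p) ^ k), by positivity, le_max_left _ _, fun n hn => ⟨?_, ?_⟩⟩
  · calc ‖c k₀‖ * r ^ k₀ / p * (p ^ n / pqInt p q n)
          = p ^ (n - 1) / pqInt p q n * (‖c k₀‖ * r ^ k₀) := by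
            rw [← pow_sub_one_mul (by omega : n ≠ 0)]
            field_simp
      _ ≤ _ := pow_pred_div_pqInt_mul_le_supNorm_lorentz_sub hp0 hpq hf hr0 hrR (by omega) hk₀
  · refine (supNorm_lorentz_sub_le hp0 hpq hf hr0.le hqrR (by omega)).trans ?_
    have := pqInt_pos hp0.le hpq (by omega : n ≠ 0)
    gcongr
    exact le_max_right _ _

theorem lorentz_exact_order (R p q r r₁ : ℝ) (hp : 1 < p) (hpq : p < q) (hqR : q < R)
    (hr : 1 ≤ r) (hrr₁ : q ^ 3 * r < p ^ 3 * r₁) (hr₁R : q ^ 4 * r₁ < p ^ 4 * R)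
    (f : ℂ → ℂ) (c : ℕ → ℂ)
    (hf : ∀ z : ℂ, ‖z‖ < R → HasSum (fun k => c k * z ^ k) (f z))
    (hnotlin : ∃ k : ℕ, 2 ≤ k ∧ c k ≠ 0) :
    ∃ c₀ C : ℝ, 0 < c₀ ∧ c₀ ≤ C ∧ ∀ n : ℕ, 1 ≤ n →
      c₀ * (p ^ n / pqInt p q n) ≤ supNorm r (fun z => lorentz p q n f z - f z) ∧
      supNorm r (fun z => lorentz p q n f z - f z) ≤ C * (p ^ n / pqInt p q n) :=
  lorentz_exact_order_general R p q r r₁ hp hpq hr hrr₁ hr₁R f c hf hnotlin
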